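/- arXiv:2405.03529 — 3 statements merged into one kernel-verified Lean document; each statement's English description precedes it below -/
import Mathlib

section
/- For all integers v ≥ 1 and 2 ≤ λ ≤ v+1, the sum ∑_{ℓ=λ-1}^{v} (v-ℓ+1) · (ℓ-1)!/(ℓ-λ+1)! equals (v+1)!/((v-λ+1)! · λ · (λ-1)). -/
/-!
Substituting `λ = m + 2`, `v = n + m + 1` and `ℓ = m + 1 + k`, the summand becomes
`(n + 1 - k) · (m + k)! / k! = m! · (n + 1 - k) · C(k + m, m)`. Summing the hockey-stick identity
`∑_{k ≤ j} C(k + m, m) = C(j + m + 1, m + 1)` once more over `j ≤ n` gives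
`∑_{k ≤ n} (n + 1 - k) · C(k + m, m) = C(n + m + 2, m + 2)`, and
`m! · C(n + m + 2, m + 2) = (n + m + 2)! / (n! · (m + 2) · (m + 1))`.
-/

open Finset Nat

theorem sum_range_sub_mul_add_choose (m n : ℕ) :
    ∑ k ∈ range (n + 1), (n + 1 - k) * (k + m).choose m = (n + m + 2).choose (m + 2) := by
  induction n with
  | zero => simp
  | succ n ih =>
    have hsplit : ∀ k ∈ range (n + 2), (n + 2 - k) * (k + m).choose m =
        (n + 1 - k) * (k + m).choose m + (k + m).choose m := by
      intro k hk
      rw [mem_range] at hk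
      rw [show n + 2 - k = n + 1 - k + 1 by omega, add_one_mul]
    rw [sum_congr rfl hsplit, sum_add_distrib, sum_range_succ, ih, sum_range_add_choose,
      Nat.sub_self, zero_mul, add_zero, show n + 1 + m + 2 = n + m + 2 + 1 by omega,
      choose_succ_succ' (n + m + 2), show n + 1 + m + 1 = n + m + 2 by omega, add_comm]

theorem factorial_add_div_factorial {K : Type*} [Field K] [CharZero K] (m k : ℕ) :
    ((m + k)! : K) / k ! = m ! * (k + m).choose m := by
  rw [div_eq_iff (Nat.cast_ne_zero.2 k.factorial_ne_zero), add_comm m k,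
    ← add_choose_mul_factorial_mul_factorial k m]
  push_cast
  ring

theorem sum_range_sub_mul_factorial_add_div_factorial {K : Type*} [Field K] [CharZero K]
    (m n : ℕ) :
    ∑ k ∈ range (n + 1), ((n + 1 - k : ℕ) : K) * (m + k)! / k ! =
      (n + m + 2)! / (n ! * (m + 2) * (m + 1)) := by
  have hsum := congrArg (Nat.cast : ℕ → K) (sum_range_sub_mul_add_choose m n)
  push_cast at hsum
  have hchoose : ((n + m + 2).choose (m + 2) : K) = (n + m + 2)! / ((m + 2)! * n !) := by
    rw [cast_choose K (by omega), show n + m + 2 - (m + 2) = n by omega]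
  have hm : (m ! : K) ≠ 0 := Nat.cast_ne_zero.2 m.factorial_ne_zero
  simp_rw [mul_div_assoc, factorial_add_div_factorial, mul_left_comm _ (m ! : K), ← mul_sum]
  rw [hsum, hchoose, factorial_succ (m + 1), factorial_succ m]
  push_cast
  field_simp
  ring

theorem gosper_sum_identity_general (v lam : ℕ) (hlam : 2 ≤ lam) (hlamv : lam ≤ v + 1) :
    ∑ ℓ ∈ Finset.Icc (lam - 1) v,
        ((v + 1 - ℓ : ℕ) : ℝ) * (Nat.factorial (ℓ - 1) : ℝ) / (Nat.factorial (ℓ + 1 - lam) : ℝ) =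
      (Nat.factorial (v + 1) : ℝ) /
        ((Nat.factorial (v + 1 - lam) : ℝ) * (lam : ℝ) * ((lam : ℝ) - 1)) := by
  obtain ⟨m, rfl⟩ : ∃ m, lam = m + 2 := ⟨lam - 2, by omega⟩
  obtain ⟨n, rfl⟩ : ∃ n, v = n + m + 1 := ⟨v - m - 1, by omega⟩
  rw [show m + 2 - 1 = m + 1 from rfl, ← Ico_add_one_right_eq_Icc, sum_Ico_eq_sum_range,
    show n + m + 1 + 1 - (m + 1) = n + 1 by omega]
  have hterm : ∀ k ∈ range (n + 1),
      ((n + m + 1 + 1 - (m + 1 + k) : ℕ) : ℝ) * (m + 1 + k - 1)! / (m + 1 + k + 1 - (m + 2))! =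
        ((n + 1 - k : ℕ) : ℝ) * (m + k)! / k ! := fun k _ => by
    rw [show m + 1 + k - 1 = m + k by omega, show m + 1 + k + 1 - (m + 2) = k by omega,
      show n + m + 1 + 1 - (m + 1 + k) = n + 1 - k by omega]
  rw [sum_congr rfl hterm, sum_range_sub_mul_factorial_add_div_factorial,
    show n + m + 1 + 1 - (m + 2) = n by omega]
  push_cast
  ring_nf

theorem gosper_sum_identity (v lam : ℕ) (hv : 1 ≤ v) (hlam : 2 ≤ lam) (hlamv : lam ≤ v + 1) :
    ∑ ℓ ∈ Finset.Icc (lam - 1) v,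
        ((v + 1 - ℓ : ℕ) : ℝ) * (Nat.factorial (ℓ - 1) : ℝ) / (Nat.factorial (ℓ + 1 - lam) : ℝ) =
      (Nat.factorial (v + 1) : ℝ) /
        ((Nat.factorial (v + 1 - lam) : ℝ) * (lam : ℝ) * ((lam : ℝ) - 1)) :=
  gosper_sum_identity_general v lam hlam hlamv
end

section
/- For every integer n ≥ 1 and every multi-index ν ∈ ℕ₀^k with |ν| = n, the sum over λ = 1 to n of (λ-1)! · S(n,λ), where S denotes the Stirling numbers of the second kind, is at most n!/(log 2)^n. -/
open Finset

/-- Stirling numbers of the second kind. -/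
def stirlingSecond : ℕ → ℕ → ℕ
  | 0, 0 => 1
  | 0, _ + 1 => 0
  | _ + 1, 0 => 0
  | n + 1, k + 1 => (k + 1) * stirlingSecond n (k + 1) + stirlingSecond n k

/-!
Bound `(λ - 1)!` by `λ!`: the sum becomes at most the ordered Bell number
`a n = ∑ λ! S(n, λ)`, which satisfies `a (n + 1) = ∑_{j ≤ n} (n + 1).choose j * a j`
(split off the first block). If `a j ≤ j! / c ^ j` for `j ≤ n`, this recurrence gives
`a (n + 1) ≤ (n + 1)! / c ^ (n + 1) * ∑_{i = 1}^{n + 1} c ^ i / i!`, and the last sum is at most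
`exp c - 1 = 1` for `c = log 2`.
-/

open scoped Nat

theorem stirlingSecond_eq_nat_stirlingSecond : ∀ n k, stirlingSecond n k = Nat.stirlingSecond n k
  | 0, 0 | 0, _ + 1 | _ + 1, 0 => rfl
  | n + 1, k + 1 => by
    rw [stirlingSecond, Nat.stirlingSecond_succ_succ, stirlingSecond_eq_nat_stirlingSecond n k,
      stirlingSecond_eq_nat_stirlingSecond n (k + 1)]

theorem sum_range_choose_succ_mul (f : ℕ → ℕ) (n : ℕ) :
    ∑ j ∈ range (n + 1), (n + 1).choose j * f j =
      ∑ j ∈ range (n + 1), n.choose j * f j + ∑ j ∈ range n, n.choose j * f (j + 1) := by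
  simp only [sum_range_succ' _ n, Nat.choose_succ_succ, add_mul, sum_add_distrib,
    Nat.choose_zero_right]
  ring

def orderedPartitionCount (n l : ℕ) : ℕ := l ! * Nat.stirlingSecond n l

def orderedBell (n : ℕ) : ℕ := ∑ l ∈ range (n + 1), orderedPartitionCount n l

theorem orderedPartitionCount_succ_zero (n : ℕ) : orderedPartitionCount (n + 1) 0 = 0 := by
  simp [orderedPartitionCount]

theorem orderedPartitionCount_succ_succ (n l : ℕ) :
    orderedPartitionCount (n + 1) (l + 1) =
      (l + 1) * (orderedPartitionCount n (l + 1) + orderedPartitionCount n l) := by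
  simp only [orderedPartitionCount, Nat.stirlingSecond_succ_succ, Nat.factorial_succ]
  ring

theorem orderedPartitionCount_eq_zero_of_lt {n l : ℕ} (h : n < l) :
    orderedPartitionCount n l = 0 := by
  simp [orderedPartitionCount, Nat.stirlingSecond_eq_zero_of_lt h]

-- Split off the first block: its complement has `j < n` elements, ordered-partitioned into `l`.
theorem orderedPartitionCount_succ_right (n l : ℕ) :
    orderedPartitionCount n (l + 1) =
      ∑ j ∈ range n, n.choose j * orderedPartitionCount j l := by
  induction n generalizing l with
  | zero => simp [orderedPartitionCount]
  | succ n ih =>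
    have hfirst : ∑ j ∈ range (n + 1), n.choose j * orderedPartitionCount j l =
        orderedPartitionCount n (l + 1) + orderedPartitionCount n l := by
      rw [sum_range_succ, ← ih, Nat.choose_self, one_mul]
    rw [sum_range_choose_succ_mul, hfirst]
    cases l with
    | zero => simp [orderedPartitionCount_succ_zero, orderedPartitionCount_succ_succ]
    | succ m =>
      simp only [orderedPartitionCount_succ_succ n (m + 1), orderedPartitionCount_succ_succ _ m,
        mul_left_comm _ (m + 1), ← mul_sum, mul_add, sum_add_distrib, ← ih]
      ring

theorem sum_orderedPartitionCount_of_lt {n N : ℕ} (h : n < N) :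
    ∑ l ∈ range N, orderedPartitionCount n l = orderedBell n :=
  (sum_subset (range_subset_range.mpr h) fun _ _ hl =>
    orderedPartitionCount_eq_zero_of_lt (by simpa using hl)).symm

theorem orderedBell_succ (n : ℕ) :
    orderedBell (n + 1) = ∑ j ∈ range (n + 1), (n + 1).choose j * orderedBell j := by
  rw [orderedBell, sum_range_succ', orderedPartitionCount_succ_zero, add_zero]
  simp only [orderedPartitionCount_succ_right]
  rw [sum_comm]
  refine sum_congr rfl fun j hj => ?_
  rw [← mul_sum, sum_orderedPartitionCount_of_lt (by simpa using hj)]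

theorem sum_range_pow_succ_div_factorial_le {c : ℝ} (hc : 0 ≤ c) (hexp : Real.exp c ≤ 2)
    (n : ℕ) : ∑ i ∈ range n, c ^ (i + 1) / (i + 1)! ≤ 1 := by
  have := Real.sum_le_exp_of_nonneg hc (n + 1)
  rw [sum_range_succ'] at this
  simp only [pow_zero, Nat.factorial_zero, Nat.cast_one, div_one] at this
  linarith

theorem choose_mul_factorial_div_pow {c : ℝ} (hc : c ≠ 0) {j m : ℕ} (h : j ≤ m) :
    (m.choose j : ℝ) * (j ! / c ^ j) = m ! / c ^ m * (c ^ (m - j) / (m - j)!) := by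
  rw [Nat.cast_choose ℝ h, ← pow_sub_mul_pow c h]
  field_simp

theorem le_factorial_div_pow_of_le_sum_choose {a : ℕ → ℝ} {c : ℝ} (hc : 0 < c)
    (hexp : Real.exp c ≤ 2) (h0 : a 0 ≤ 1)
    (hsucc : ∀ n, a (n + 1) ≤ ∑ j ∈ range (n + 1), ((n + 1).choose j : ℝ) * a j) (n : ℕ) :
    a n ≤ n ! / c ^ n := by
  induction n using Nat.strong_induction_on with
  | _ n ih =>
    rcases n with _ | n
    · simpa using h0
    calc a (n + 1) ≤ ∑ j ∈ range (n + 1), ((n + 1).choose j : ℝ) * (j ! / c ^ j) :=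
          (hsucc n).trans <| sum_le_sum fun j hj =>
            mul_le_mul_of_nonneg_left (ih j (by simpa using hj)) (by positivity)
      _ = (n + 1)! / c ^ (n + 1) * ∑ i ∈ range (n + 1), c ^ (i + 1) / (i + 1)! := by
          rw [mul_sum]
          conv_rhs => rw [← sum_range_reflect]
          refine sum_congr rfl fun j hj => ?_
          have hj : j < n + 1 := by simpa using hj
          rw [choose_mul_factorial_div_pow hc.ne' hj.le,
            show n + 1 - 1 - j + 1 = n + 1 - j by omega]
      _ ≤ (n + 1)! / c ^ (n + 1) :=
          mul_le_of_le_one_right (by positivity)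
            (sum_range_pow_succ_div_factorial_le hc.le hexp _)

theorem orderedBell_le (n : ℕ) : (orderedBell n : ℝ) ≤ n ! / Real.log 2 ^ n :=
  le_factorial_div_pow_of_le_sum_choose (a := fun n => (orderedBell n : ℝ))
    (Real.log_pos one_lt_two) (Real.exp_log two_pos).le
    (by simp [orderedBell, orderedPartitionCount])
    (fun n => by simp [orderedBell_succ]) n

theorem ordered_bell_bound_general (n : ℕ) :
    ∑ lam ∈ Finset.Icc 1 n, (Nat.factorial (lam - 1) : ℝ) * (stirlingSecond n lam : ℝ) ≤
      (Nat.factorial n : ℝ) / (Real.log 2) ^ n := by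
  have hterm (l : ℕ) : (l - 1)! * stirlingSecond n l ≤ orderedPartitionCount n l := by
    rw [orderedPartitionCount, stirlingSecond_eq_nat_stirlingSecond]
    gcongr
    exact Nat.sub_le l 1
  calc ∑ l ∈ Icc 1 n, ((l - 1)! : ℝ) * (stirlingSecond n l : ℝ)
      ≤ ∑ l ∈ Icc 1 n, (orderedPartitionCount n l : ℝ) :=
        sum_le_sum fun l _ => by exact_mod_cast hterm l
    _ ≤ ∑ l ∈ range (n + 1), (orderedPartitionCount n l : ℝ) :=
        sum_le_sum_of_subset_of_nonneg (fun l hl => by simp at hl ⊢; omega)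
          fun _ _ _ => by positivity
    _ = orderedBell n := by simp [orderedBell]
    _ ≤ _ := orderedBell_le n

theorem ordered_bell_bound {k : ℕ} (n : ℕ) (hn : 1 ≤ n) (ν : Fin k → ℕ)
    (hν : ∑ j, ν j = n) :
    ∑ lam ∈ Finset.Icc 1 n, (Nat.factorial (lam - 1) : ℝ) * (stirlingSecond n lam : ℝ) ≤
      (Nat.factorial n : ℝ) / (Real.log 2) ^ n :=
  ordered_bell_bound_general n
end

section
/- Cramér's inequality: for every integer ν ≥ 0 and every real x, the absolute value of the ν-th derivative of e^{-x²/2} is at most 1.1 · √(ν!). -/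
/-!
The function `t ↦ exp (-t ^ 2 / 2)` is the characteristic function of the standard Gaussian
law `N(0, 1)`. Differentiating under the integral sign, its `ν`-th derivative is bounded by the
absolute moment `E |X| ^ ν = 2 ^ (ν / 2) Γ((ν + 1) / 2) / √π`. These moments satisfy
`E |X| ^ (ν + 2) = (ν + 1) E |X| ^ ν`, while `√((ν + 2)!) ≥ (ν + 1) √(ν!)`, so the bound
`E |X| ^ ν ≤ 1.1 √(ν!)` propagates from `ν = 0, 1`, where the moments are `1` and `√(2 / π)`.
-/

open Real MeasureTheory ProbabilityTheory
open scoped Nat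

lemma norm_iteratedDeriv_ofReal_comp {f : ℝ → ℝ} {n : ℕ} (hf : ContDiff ℝ n f) (x : ℝ) :
    ‖iteratedDeriv n (fun t => (f t : ℂ)) x‖ = |iteratedDeriv n f x| := by
  rw [← Real.norm_eq_abs, ← norm_iteratedFDeriv_eq_norm_iteratedDeriv,
    ← norm_iteratedFDeriv_eq_norm_iteratedDeriv]
  exact Complex.ofRealLI.norm_iteratedFDeriv_comp_left hf.contDiffAt le_rfl

lemma norm_iteratedDeriv_charFun_le {μ : Measure ℝ} [IsFiniteMeasure μ] {n : ℕ}
    (hint : MemLp id n μ) (t : ℝ) :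
    ‖iteratedDeriv n (charFun μ) t‖ ≤ ∫ x, |x| ^ n ∂μ := by
  rw [iteratedDeriv_charFun hint, norm_mul, norm_pow, Complex.norm_I, one_pow, one_mul]
  refine (norm_integral_le_integral_norm _).trans_eq ?_
  congr with x
  rw [norm_mul, ← Complex.ofReal_mul, Complex.norm_exp_ofReal_mul_I, mul_one, norm_pow,
    Complex.norm_real, Real.norm_eq_abs]

lemma charFun_gaussianReal_zero_one (t : ℝ) :
    charFun (gaussianReal 0 1) t = (rexp (-t ^ 2 / 2) : ℂ) := by
  simp [charFun_gaussianReal, neg_div]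

lemma integral_abs_pow_gaussianReal (n : ℕ) :
    ∫ x, |x| ^ n ∂gaussianReal 0 1 = 2 ^ ((n : ℝ) / 2) * Gamma ((n + 1) / 2) / √π := by
  rw [integral_gaussianReal_eq_integral_smul one_ne_zero]
  have hsymm := integral_comp_abs (f := fun y => (√(2 * π))⁻¹ * rexp (-y ^ 2 / 2) * y ^ n)
  simp only [sq_abs] at hsymm
  simp only [gaussianPDFReal, smul_eq_mul, NNReal.coe_one, mul_one, sub_zero, mul_assoc]
    at hsymm ⊢
  have hGamma : ∫ y in Set.Ioi (0 : ℝ), rexp (-y ^ 2 / 2) * y ^ n =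
      (1 / 2 : ℝ) ^ (-((n : ℝ) + 1) / 2) * (1 / 2) * Gamma ((n + 1) / 2) := by
    rw [← integral_rpow_mul_exp_neg_mul_rpow two_pos (by linarith [n.cast_nonneg (α := ℝ)])
      one_half_pos]
    refine setIntegral_congr_fun measurableSet_Ioi fun y _ => ?_
    simp only [Real.rpow_natCast, Real.rpow_two]
    ring_nf
  have hpow : (1 / 2 : ℝ) ^ (-((n : ℝ) + 1) / 2) = 2 ^ ((n : ℝ) / 2) * √2 := by
    rw [one_div, Real.inv_rpow zero_le_two, ← Real.rpow_neg zero_le_two, Real.sqrt_eq_rpow,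
      ← Real.rpow_add two_pos]
    ring_nf
  have hsqrt2 : √2 ≠ 0 := by positivity
  rw [hsymm, integral_const_mul, hGamma, hpow, Real.sqrt_mul zero_le_two]
  field_simp

lemma integral_abs_pow_add_two_gaussianReal (n : ℕ) :
    ∫ x, |x| ^ (n + 2) ∂gaussianReal 0 1 = (n + 1) * ∫ x, |x| ^ n ∂gaussianReal 0 1 := by
  rw [integral_abs_pow_gaussianReal, integral_abs_pow_gaussianReal, Nat.cast_add,
    add_div _ ((2 : ℕ) : ℝ), Nat.cast_ofNat, div_self two_ne_zero, Real.rpow_add_one two_ne_zero,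
    add_right_comm, add_div _ (2 : ℝ), div_self two_ne_zero, Gamma_add_one (by positivity)]
  ring

lemma mul_sqrt_factorial_le_sqrt_factorial_add_two (n : ℕ) :
    (n + 1) * √(n ! : ℝ) ≤ √((n + 2)! : ℝ) := by
  rw [← Real.sqrt_sq (by positivity : (0 : ℝ) ≤ n + 1), ← Real.sqrt_mul (by positivity)]
  gcongr
  push_cast [Nat.factorial_succ]
  nlinarith [(n !).cast_nonneg (α := ℝ)]

lemma integral_abs_pow_gaussianReal_le (n : ℕ) :
    ∫ x, |x| ^ n ∂gaussianReal 0 1 ≤ 1.1 * √(n ! : ℝ) := by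
  induction n using Nat.twoStepInduction with
  | zero => norm_num
  | one =>
    rw [integral_abs_pow_gaussianReal, Nat.cast_one, one_add_one_eq_two, div_self two_ne_zero,
      Gamma_one, mul_one, ← Real.sqrt_eq_rpow, Nat.factorial_one, Nat.cast_one, Real.sqrt_one,
      mul_one, div_le_iff₀ (by positivity)]
    calc √2 ≤ √π := Real.sqrt_le_sqrt (by linarith [pi_gt_three])
      _ ≤ 1.1 * √π := by nlinarith [Real.sqrt_nonneg π]
  | more n ih _ =>
    rw [integral_abs_pow_add_two_gaussianReal]
    calc (n + 1 : ℝ) * ∫ x, |x| ^ n ∂gaussianReal 0 1 ≤ (n + 1) * (1.1 * √(n ! : ℝ)) := by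
          gcongr
      _ ≤ 1.1 * √((n + 2)! : ℝ) := by
        rw [mul_left_comm]
        gcongr
        exact mul_sqrt_factorial_le_sqrt_factorial_add_two n

theorem cramer_inequality (ν : ℕ) (x : ℝ) :
    |iteratedDeriv ν (fun t : ℝ => Real.exp (-t ^ 2 / 2)) x| ≤
      1.1 * Real.sqrt (Nat.factorial ν) := by
  have hsmooth : ContDiff ℝ ν (fun t : ℝ => rexp (-t ^ 2 / 2)) := by fun_prop
  have hcharFun : (fun t : ℝ => (rexp (-t ^ 2 / 2) : ℂ)) = charFun (gaussianReal 0 1) :=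
    funext fun t => (charFun_gaussianReal_zero_one t).symm
  calc |iteratedDeriv ν (fun t : ℝ => rexp (-t ^ 2 / 2)) x|
      = ‖iteratedDeriv ν (charFun (gaussianReal 0 1)) x‖ := by
        rw [← hcharFun, norm_iteratedDeriv_ofReal_comp hsmooth]
    _ ≤ ∫ y, |y| ^ ν ∂gaussianReal 0 1 := norm_iteratedDeriv_charFun_le (memLp_id_gaussianReal ν) x
    _ ≤ 1.1 * √(ν ! : ℝ) := integral_abs_pow_gaussianReal_le ν
end
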